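/- arXiv:1104.4267 — 3 statements merged into one kernel-verified Lean document; each statement's English description precedes it below -/
import Mathlib

section
/- Energy identity for the Hamiltonian-perturbed Cauchy–Riemann equation (Lemma 5.1 of the paper, transcribed to ℂⁿ with its standard symplectic and complex structures): Let H : [0,1] × ℂⁿ → ℝ be a smooth compactly supported Hamiltonian and ρ₊ an elongation function of type ρ₊. Let u : ℝ × [0,1] → ℂⁿ be a smooth map solving ∂u/∂τ + i(∂u/∂t − ρ₊(τ)X_{H_t}(u(τ,t))) = 0, with finite energy E_{(H,ρ₊)}(u) < ∞. Assume that u(τ,·) converges uniformly on [0,1] as τ → +∞ to a continuous path ℓ₊ : [0,1] → ℂⁿ, that the improper integral ∫u*ω converges, and that ∫_{ℝ×[0,1]} |dH_t(u(τ,t))[∂u/∂τ(τ,t)]| dτ dt < ∞. Then E_{(H,ρ₊)}(u) = ∫u*ω + ∫₀¹ H(t, ℓ₊(t)) dt − ∫_ℝ ρ₊′(τ) (∫₀¹ H(t, u(τ,t)) dt) dτ. -/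
open MeasureTheory Set Filter

noncomputable section

abbrev CE (n : ℕ) : Type := EuclideanSpace ℂ (Fin n)

/-- The standard symplectic form `ω(v, w) = ⟨i • v, w⟩_ℝ` on `ℂⁿ ≅ ℝ²ⁿ`. -/
def symp {n : ℕ} (v w : CE n) : ℝ := inner (𝕜 := ℝ) ((Complex.I : ℂ) • v) w

/-- The Hamiltonian vector field `X_{H_t}(x) = -i ∇H_t(x)`. -/
def hamVF {n : ℕ} (H : ℝ → CE n → ℝ) (t : ℝ) (x : CE n) : CE n :=
  (-Complex.I : ℂ) • gradient (H t) x

/-- ∂u/∂τ. -/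
def d1 {n : ℕ} (u : ℝ × ℝ → CE n) (p : ℝ × ℝ) : CE n := deriv (fun s => u (s, p.2)) p.1

/-- ∂u/∂t. -/
def d2 {n : ℕ} (u : ℝ × ℝ → CE n) (p : ℝ × ℝ) : CE n := deriv (fun s => u (p.1, s)) p.2

/-- The strip `ℝ × [0,1]`. -/
def strip : Set (ℝ × ℝ) := Set.univ ×ˢ Set.Icc (0 : ℝ) 1

/-- The energy density `|∂u/∂τ|² + |∂u/∂t − ρ(τ) X_{H_t}(u)|²`. -/
def enDensity {n : ℕ} (H : ℝ → CE n → ℝ) (ρ : ℝ → ℝ) (u : ℝ × ℝ → CE n) (p : ℝ × ℝ) : ℝ :=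
  ‖d1 u p‖ ^ 2 + ‖d2 u p - ρ p.1 • hamVF H p.2 (u p)‖ ^ 2

/-- The energy `E_{(H,ρ)}(u)`. -/
def energy {n : ℕ} (H : ℝ → CE n → ℝ) (ρ : ℝ → ℝ) (u : ℝ × ℝ → CE n) : ℝ :=
  (1 / 2) * ∫ p in strip, enDensity H ρ u p

/-- The symplectic area `∫ u*ω`. -/
def area {n : ℕ} (u : ℝ × ℝ → CE n) : ℝ := ∫ p in strip, symp (d1 u p) (d2 u p)

def Eplus {n : ℕ} (H : ℝ → CE n → ℝ) : ℝ := ∫ t in (0:ℝ)..1, ⨆ x : CE n, H t x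
def Eminus {n : ℕ} (H : ℝ → CE n → ℝ) : ℝ := -∫ t in (0:ℝ)..1, ⨅ x : CE n, H t x
def hoferNorm {n : ℕ} (H : ℝ → CE n → ℝ) : ℝ := Eplus H + Eminus H

/-- An elongation function of type `ρ₊`. -/
structure IsElongationPlus (ρ : ℝ → ℝ) : Prop where
  smooth : ContDiff ℝ (⊤ : ℕ∞) ρ
  mono : Monotone ρ
  mem : ∀ τ : ℝ, ρ τ ∈ Set.Icc (0:ℝ) 1
  zero : ∀ τ : ℝ, τ ≤ 0 → ρ τ = 0
  one : ∀ τ : ℝ, 1 ≤ τ → ρ τ = 1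

/-- An elongation function of type `ρ_K`. -/
structure IsElongationK (K : ℝ) (ρ : ℝ → ℝ) : Prop where
  smooth : ContDiff ℝ (⊤ : ℕ∞) ρ
  mem : ∀ τ : ℝ, ρ τ ∈ Set.Icc (0:ℝ) 1
  zero : ∀ τ : ℝ, K ≤ |τ| → ρ τ = 0
  one : ∀ τ : ℝ, |τ| ≤ K - 1 → ρ τ = 1
  incr : ∀ τ ∈ Set.Icc (-K) (-K + 1), 0 ≤ deriv ρ τ
  decr : ∀ τ ∈ Set.Icc (K - 1) K, deriv ρ τ ≤ 0

/-- `u` solves the `ρ`-perturbed Cauchy–Riemann equation on `ℝ × [0,1]`. -/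
def SolvesCR {n : ℕ} (H : ℝ → CE n → ℝ) (ρ : ℝ → ℝ) (u : ℝ × ℝ → CE n) : Prop :=
  ∀ p : ℝ × ℝ, p.2 ∈ Set.Icc (0:ℝ) 1 →
    d1 u p + (Complex.I : ℂ) • (d2 u p - ρ p.1 • hamVF H p.2 (u p)) = 0

/-- `φ` is the Hamiltonian flow of `H`. -/
structure IsHamFlow {n : ℕ} (H : ℝ → CE n → ℝ) (φ : ℝ → CE n ≃ CE n) : Prop where
  init : ∀ x, φ 0 x = x
  isFlow : ∀ t x, HasDerivAt (fun s => φ s x) (hamVF H t (φ t x)) t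
  smooth : ContDiff ℝ (⊤ : ℕ∞) fun p : ℝ × CE n => φ p.1 p.2
  smooth_symm : ContDiff ℝ (⊤ : ℕ∞) fun p : ℝ × CE n => (φ p.1).symm p.2



/-! ### Auxiliary lemmas -/

section Aux

variable {n : ℕ} {u : ℝ × ℝ → CE n} {H : ℝ → CE n → ℝ} {ρ : ℝ → ℝ} {ℓ : ℝ → CE n}

lemma rinner_re (v w : CE n) : inner ℝ v w = Complex.re (inner ℂ v w) := by
  simp only [PiLp.inner_apply, Complex.inner, RCLike.inner_apply, Complex.re_sum]

lemma rinner_I_I (v w : CE n) : inner ℝ (Complex.I • v) (Complex.I • w) = inner ℝ v w := by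
  rw [rinner_re, rinner_re, inner_smul_left, inner_smul_right]
  simp [Complex.ext_iff]

lemma grad_inner (f : CE n → ℝ) (x v : CE n) :
    inner ℝ (gradient f x) v = fderiv ℝ f x v :=
  InnerProductSpace.toDual_symm_apply

lemma key_alg (f : CE n → ℝ) (a d2 x : CE n) (r : ℝ)
    (h : a + (Complex.I : ℂ) • (d2 - r • ((-Complex.I : ℂ) • gradient f x)) = 0) :
    ‖a‖ ^ 2 + ‖d2 - r • ((-Complex.I : ℂ) • gradient f x)‖ ^ 2
      = 2 * (symp a d2 + r * fderiv ℝ f x a) := by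
  set X : CE n := (-Complex.I : ℂ) • gradient f x with hX
  set w : CE n := d2 - r • X with hw
  have ha : a = (-Complex.I : ℂ) • w := by
    have h2 : a = -((Complex.I : ℂ) • w) := by
      rw [eq_neg_iff_add_eq_zero]; exact h
    rw [h2]; module
  have hIa : (Complex.I : ℂ) • a = w := by
    rw [ha, smul_smul]; simp
  have hnorm : ‖a‖ = ‖w‖ := by rw [ha, norm_smul]; simp
  have hd2 : d2 = w + r • X := by rw [hw]; module
  have hsymp : symp a d2 = ‖w‖ ^ 2 + r * inner ℝ w X := by
    rw [symp, hIa, hd2, inner_add_right, real_inner_smul_right, real_inner_self_eq_norm_sq]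
  have hwX : inner ℝ w X = - fderiv ℝ f x a := by
    rw [← hIa, hX]
    have : ((-Complex.I : ℂ) • gradient f x) = (Complex.I : ℂ) • (-gradient f x) := by module
    rw [this, rinner_I_I, inner_neg_right, real_inner_comm, grad_inner]
  rw [hsymp, hwX, hnorm]; ring

lemma d1_hasDerivAt (hu : ContDiff ℝ (⊤ : ℕ∞) u) (p : ℝ × ℝ) :
    HasDerivAt (fun s => u (s, p.2)) (fderiv ℝ u p ((1:ℝ), (0:ℝ))) p.1 := by
  have h1 : HasDerivAt (fun s : ℝ => (s, p.2)) ((1:ℝ), (0:ℝ)) p.1 :=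
    (hasDerivAt_id p.1).prodMk (hasDerivAt_const p.1 p.2)
  have h2 := (hu.differentiable (by simp) (p.1, p.2)).hasFDerivAt
  exact h2.comp_hasDerivAt p.1 h1

lemma d1_eq (hu : ContDiff ℝ (⊤ : ℕ∞) u) (p : ℝ × ℝ) : d1 u p = fderiv ℝ u p ((1:ℝ), (0:ℝ)) :=
  (d1_hasDerivAt hu p).deriv

lemma d1_cont (hu : ContDiff ℝ (⊤ : ℕ∞) u) : Continuous (d1 u) := by
  have : Continuous fun p : ℝ × ℝ => fderiv ℝ u p ((1:ℝ), (0:ℝ)) :=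
    (hu.continuous_fderiv (by simp)).clm_apply continuous_const
  exact this.congr fun p => (d1_eq hu p).symm

lemma fderivH_eq (hH : ContDiff ℝ (⊤ : ℕ∞) (Function.uncurry H)) (t : ℝ) (x : CE n) :
    fderiv ℝ (H t) x
      = (fderiv ℝ (Function.uncurry H) (t, x)).comp (ContinuousLinearMap.inr ℝ ℝ (CE n)) := by
  have h1 : HasFDerivAt (fun y : CE n => ((t:ℝ), y)) (ContinuousLinearMap.inr ℝ ℝ (CE n)) x :=
    hasFDerivAt_prodMk_right t x
  have h2 := (hH.differentiable (by simp) (t, x)).hasFDerivAt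
  exact (h2.comp x h1).fderiv

lemma dH_cont (hH : ContDiff ℝ (⊤ : ℕ∞) (Function.uncurry H)) (hu : ContDiff ℝ (⊤ : ℕ∞) u) :
    Continuous fun p : ℝ × ℝ => fderiv ℝ (H p.2) (u p) (d1 u p) := by
  have h1 : Continuous fun p : ℝ × ℝ => fderiv ℝ (Function.uncurry H) (p.2, u p) :=
    (hH.continuous_fderiv (by simp)).comp (continuous_snd.prodMk (hu.continuous))
  have h2 : Continuous fun p : ℝ × ℝ =>
      (fderiv ℝ (Function.uncurry H) (p.2, u p)) ((0 : ℝ), d1 u p) :=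
    h1.clm_apply (continuous_const.prodMk (d1_cont hu))
  refine h2.congr fun p => ?_
  rw [fderivH_eq hH]
  rfl

lemma hasDerivAt_Hu (hH : ContDiff ℝ (⊤ : ℕ∞) (Function.uncurry H)) (hu : ContDiff ℝ (⊤ : ℕ∞) u)
    (t τ : ℝ) :
    HasDerivAt (fun s => H t (u (s, t))) (fderiv ℝ (H t) (u (τ, t)) (d1 u (τ, t))) τ := by
  have h2 : HasFDerivAt (H t) (fderiv ℝ (H t) (u (τ, t))) (u (τ, t)) := by
    have hd : DifferentiableAt ℝ (H t) (u (τ, t)) := by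
      have h3 := (hH.differentiable (by simp)) (t, u (τ, t))
      have h4 : DifferentiableAt ℝ (fun y : CE n => ((t:ℝ), y)) (u (τ, t)) :=
        (differentiableAt_const _).prodMk differentiableAt_id
      exact h3.comp _ h4
    exact hd.hasFDerivAt
  have h1 : HasDerivAt (fun s => u (s, t)) (d1 u (τ, t)) τ := by
    have := d1_hasDerivAt hu (τ, t)
    simpa [d1_eq hu (τ, t)] using this
  exact h2.comp_hasDerivAt τ h1

lemma deriv_rho_zero (hρ : IsElongationPlus ρ) {τ : ℝ} (hτ : τ ∉ Set.Icc (0:ℝ) 1) :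
    deriv ρ τ = 0 := by
  rw [mem_Icc, not_and_or, not_le, not_le] at hτ
  rcases hτ with h | h
  · have hev : ρ =ᶠ[nhds τ] fun _ => 0 :=
      Filter.eventually_of_mem (Iio_mem_nhds h) fun y hy => hρ.zero y (le_of_lt hy)
    rw [hev.deriv_eq, deriv_const]
  · have hev : ρ =ᶠ[nhds τ] fun _ => 1 :=
      Filter.eventually_of_mem (Ioi_mem_nhds h) fun y hy => hρ.one y (le_of_lt hy)
    rw [hev.deriv_eq, deriv_const]

lemma rho_deriv_supp (hρ : IsElongationPlus ρ) : HasCompactSupport (deriv ρ) :=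
  HasCompactSupport.intro isCompact_Icc fun _ hx => deriv_rho_zero hρ hx

lemma per_t (hHsmooth : ContDiff ℝ (⊤ : ℕ∞) (Function.uncurry H))
    (hρ : IsElongationPlus ρ) (hu : ContDiff ℝ (⊤ : ℕ∞) u)
    (hconv : TendstoUniformlyOn (fun τ t => u (τ, t)) ℓ Filter.atTop (Set.Icc 0 1))
    {t : ℝ} (ht : t ∈ Set.Icc (0:ℝ) 1)
    (hint : Integrable (fun τ => fderiv ℝ (H t) (u (τ, t)) (d1 u (τ, t)))) :
    ∫ τ : ℝ, ρ τ * fderiv ℝ (H t) (u (τ, t)) (d1 u (τ, t))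
      = H t (ℓ t) - ∫ τ : ℝ, deriv ρ τ * H t (u (τ, t)) := by
  set g : ℝ → ℝ := fun τ => H t (u (τ, t)) with hgdef
  set g' : ℝ → ℝ := fun τ => fderiv ℝ (H t) (u (τ, t)) (d1 u (τ, t)) with hg'def
  have hg : ∀ τ, HasDerivAt g (g' τ) τ := fun τ => hasDerivAt_Hu hHsmooth hu t τ
  have hρd : ∀ τ, HasDerivAt ρ (deriv ρ τ) τ := fun τ =>
    (hρ.smooth.differentiable (by simp) τ).hasDerivAt
  have hGd : ∀ τ, HasDerivAt (fun s => ρ s * g s) (deriv ρ τ * g τ + ρ τ * g' τ) τ :=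
    fun τ => (hρd τ).mul (hg τ)
  have hHt_cont : Continuous (H t) :=
    hHsmooth.continuous.comp (continuous_const.prodMk continuous_id)
  have hgcont : Continuous g :=
    hHt_cont.comp (hu.continuous.comp (continuous_id.prodMk continuous_const))
  have hρcont : Continuous ρ := hρ.smooth.continuous
  have hρ'cont : Continuous (deriv ρ) := hρ.smooth.continuous_deriv (by simp)
  have h1 : Integrable (fun τ => deriv ρ τ * g τ) :=
    ((hρ'cont.mul hgcont)).integrable_of_hasCompactSupport ((rho_deriv_supp hρ).mul_right)
  have hbd : ∀ τ, ‖ρ τ‖ ≤ 1 := fun τ =>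
    abs_le.mpr ⟨by linarith [(hρ.mem τ).1], (hρ.mem τ).2⟩
  have h2 : Integrable (fun τ => ρ τ * g' τ) :=
    hint.bdd_mul hρcont.aestronglyMeasurable (ae_of_all _ hbd)
  have hGint : Integrable (fun τ => deriv ρ τ * g τ + ρ τ * g' τ) := h1.add h2
  have hgt : Tendsto g atTop (nhds (H t (ℓ t))) :=
    (hHt_cont.tendsto (ℓ t)).comp (hconv.tendsto_at ht)
  have htend : Tendsto (fun τ => ρ τ * g τ) atTop (nhds (H t (ℓ t))) := by
    refine Tendsto.congr' ?_ hgt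
    filter_upwards [Filter.eventually_ge_atTop (1:ℝ)] with τ hτ
    rw [hρ.one τ hτ, one_mul]
  have hIoi : ∫ τ in Ioi (0:ℝ), (deriv ρ τ * g τ + ρ τ * g' τ)
      = H t (ℓ t) - ρ 0 * g 0 := by
    refine integral_Ioi_of_hasDerivAt_of_tendsto
      ((hρcont.mul hgcont).continuousWithinAt) (fun x _ => hGd x)
      (hGint.integrableOn) htend
  have hzero : ρ 0 * g 0 = 0 := by rw [hρ.zero 0 le_rfl, zero_mul]
  have hIic : ∫ τ in Iic (0:ℝ), (deriv ρ τ * g τ + ρ τ * g' τ) = 0 := by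
    rw [← MeasureTheory.Measure.restrict_congr_set Iio_ae_eq_Iic]
    rw [MeasureTheory.setIntegral_congr_fun measurableSet_Iio
      (fun τ (hτ : τ ∈ Iio (0:ℝ)) => by
        have h01 : deriv ρ τ = 0 := deriv_rho_zero hρ (fun hm => absurd hm.1 (not_le.2 hτ))
        have h02 : ρ τ = 0 := hρ.zero τ (le_of_lt hτ)
        show deriv ρ τ * g τ + ρ τ * g' τ = (0:ℝ)
        rw [h01, h02]; ring)]
    simp
  have htotal : ∫ τ : ℝ, (deriv ρ τ * g τ + ρ τ * g' τ) = H t (ℓ t) := by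
    rw [← MeasureTheory.integral_add_compl measurableSet_Iic hGint, compl_Iic, hIic, hIoi,
      hzero]
    ring
  rw [MeasureTheory.integral_add h1 h2] at htotal
  linarith [htotal]

end Aux

/-- Lemma 5.1: the energy identity
`E_{(H,ρ₊)}(u) = ∫u*ω + ∫₀¹ H(t, ℓ₊(t)) dt − ∫_ℝ ρ₊′(τ) (∫₀¹ H(t, u(τ,t)) dt) dτ`
for finite-energy solutions of the `ρ₊`-perturbed Cauchy–Riemann equation on `ℝ × [0,1]`. -/
theorem energy_identity {n : ℕ} (H : ℝ → CE n → ℝ) (ρ : ℝ → ℝ) (u : ℝ × ℝ → CE n)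
    (ℓ : ℝ → CE n)
    (hHsmooth : ContDiff ℝ (⊤ : ℕ∞) (Function.uncurry H))
    (hHsupp : HasCompactSupport (Function.uncurry H))
    (hρ : IsElongationPlus ρ)
    (hu : ContDiff ℝ (⊤ : ℕ∞) u)
    (hpde : SolvesCR H ρ u)
    (hfin : IntegrableOn (enDensity H ρ u) strip)
    (harea : IntegrableOn (fun p => symp (d1 u p) (d2 u p)) strip)
    (hdH : IntegrableOn (fun p => fderiv ℝ (H p.2) (u p) (d1 u p)) strip)
    (hℓ : Continuous ℓ)
    (hconv : TendstoUniformlyOn (fun τ t => u (τ, t)) ℓ Filter.atTop (Set.Icc 0 1)) :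
    energy H ρ u =
      area u + (∫ t in (0:ℝ)..1, H t (ℓ t))
        - ∫ τ : ℝ, deriv ρ τ * ∫ t in (0:ℝ)..1, H t (u (τ, t)) := by
  classical
  have hmeas_strip : MeasurableSet strip := MeasurableSet.univ.prod measurableSet_Icc
  set ν : Measure ℝ := (volume : Measure ℝ).restrict (Set.Icc (0:ℝ) 1) with hν
  have hmeq : (volume : Measure (ℝ × ℝ)).restrict strip = (volume : Measure ℝ).prod ν := by
    rw [hν, strip, Measure.volume_eq_prod, ← Measure.prod_restrict, Measure.restrict_univ]
  set F : ℝ × ℝ → ℝ := fun p => fderiv ℝ (H p.2) (u p) (d1 u p) with hF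
  have hbd : ∀ τ, ‖ρ τ‖ ≤ 1 := fun τ =>
    abs_le.mpr ⟨by linarith [(hρ.mem τ).1], (hρ.mem τ).2⟩
  -- Step 1: pointwise identity from the PDE
  have hpt : ∀ p ∈ strip, enDensity H ρ u p
      = 2 * (symp (d1 u p) (d2 u p) + ρ p.1 * F p) := by
    intro p hp
    have h := hpde p hp.2
    simp only [hamVF] at h
    simp only [enDensity, hamVF, hF]
    exact key_alg (H p.2) (d1 u p) (d2 u p) (u p) (ρ p.1) h
  have hρF_int : IntegrableOn (fun p : ℝ × ℝ => ρ p.1 * F p) strip :=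
    hdH.bdd_mul ((hρ.smooth.continuous.comp continuous_fst).aestronglyMeasurable)
      (ae_of_all _ fun p => hbd p.1)
  -- Step 2: energy = area + ∫ ρ F
  have hstep1 : energy H ρ u = area u + ∫ p in strip, ρ p.1 * F p := by
    rw [energy, MeasureTheory.setIntegral_congr_fun hmeas_strip hpt, integral_const_mul,
      MeasureTheory.integral_add harea hρF_int, area]
    ring
  -- Step 3: Fubini
  have hρF' : Integrable (fun p : ℝ × ℝ => ρ p.1 * F p) ((volume : Measure ℝ).prod ν) := by
    rw [← hmeq]; exact hρF_int
  have hdH' : Integrable F ((volume : Measure ℝ).prod ν) := by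
    rw [← hmeq]; exact hdH
  have huncurry : Integrable (Function.uncurry fun τ t => ρ τ * F (τ, t))
      ((volume : Measure ℝ).prod ν) := by
    exact hρF'
  have hswap1 : (∫ p in strip, ρ p.1 * F p)
      = ∫ t, (∫ τ, ρ τ * F (τ, t)) ∂ν := by
    have e1 : (∫ p in strip, ρ p.1 * F p)
        = ∫ p, ρ p.1 * F p ∂((volume : Measure ℝ).prod ν) := by rw [← hmeq]
    rw [e1, MeasureTheory.integral_prod _ hρF']
    exact MeasureTheory.integral_integral_swap huncurry
  have hae_int : ∀ᵐ t ∂ν, Integrable (fun τ => F (τ, t)) := hdH'.prod_left_ae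
  have hae_mem : ∀ᵐ t ∂ν, t ∈ Set.Icc (0:ℝ) 1 := ae_restrict_mem measurableSet_Icc
  have haeeq : ∀ᵐ t ∂ν, (∫ τ, ρ τ * F (τ, t))
      = H t (ℓ t) - ∫ τ, deriv ρ τ * H t (u (τ, t)) := by
    filter_upwards [hae_int, hae_mem] with t h1 h2
    exact per_t hHsmooth hρ hu hconv h2 h1
  have hHl_cont : Continuous fun t => H t (ℓ t) :=
    hHsmooth.continuous.comp (continuous_id.prodMk hℓ)
  have hint1 : Integrable (fun t => H t (ℓ t)) ν :=
    hHl_cont.continuousOn.integrableOn_compact isCompact_Icc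
  have hcontg : Continuous fun p : ℝ × ℝ => deriv ρ p.1 * H p.2 (u p) :=
    ((hρ.smooth.continuous_deriv (by simp)).comp continuous_fst).mul
      (hHsmooth.continuous.comp (continuous_snd.prodMk hu.continuous))
  have h2full : Integrable (fun p : ℝ × ℝ => deriv ρ p.1 * H p.2 (u p))
      ((volume : Measure ℝ).prod ν) := by
    rw [← hmeq]
    have hK : MeasurableSet (Set.Icc (0:ℝ) 1 ×ˢ Set.Icc (0:ℝ) 1) :=
      measurableSet_Icc.prod measurableSet_Icc
    have hA : IntegrableOn (fun p : ℝ × ℝ => deriv ρ p.1 * H p.2 (u p))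
        (Set.Icc (0:ℝ) 1 ×ˢ Set.Icc (0:ℝ) 1) :=
      hcontg.continuousOn.integrableOn_compact (isCompact_Icc.prod isCompact_Icc)
    have hB : IntegrableOn (fun p : ℝ × ℝ => deriv ρ p.1 * H p.2 (u p))
        (strip \ (Set.Icc (0:ℝ) 1 ×ˢ Set.Icc (0:ℝ) 1)) := by
      refine Integrable.congr (integrableOn_zero) ?_
      refine (ae_restrict_mem (hmeas_strip.diff hK)).mono fun p hp => ?_
      have hp1 : p.1 ∉ Set.Icc (0:ℝ) 1 := fun hmem => hp.2 ⟨hmem, hp.1.2⟩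
      simp [deriv_rho_zero hρ hp1]
    refine ((hA.union hB).mono_set fun p hp => ?_)
    by_cases hpK : p ∈ Set.Icc (0:ℝ) 1 ×ˢ Set.Icc (0:ℝ) 1
    · exact Or.inl hpK
    · exact Or.inr ⟨hp, hpK⟩
  have hint2 : Integrable (fun t => ∫ τ, deriv ρ τ * H t (u (τ, t))) ν :=
    h2full.integral_prod_right
  have hswap2 : (∫ t, (∫ τ, deriv ρ τ * H t (u (τ, t))) ∂ν)
      = ∫ τ : ℝ, (∫ t, deriv ρ τ * H t (u (τ, t)) ∂ν) :=
    (MeasureTheory.integral_integral_swap h2full).symm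
  have hIcc : ∀ f : ℝ → ℝ, (∫ t, f t ∂ν) = ∫ t in (0:ℝ)..1, f t := by
    intro f
    rw [intervalIntegral.integral_of_le zero_le_one, hν,
      ← MeasureTheory.integral_Icc_eq_integral_Ioc]
  have hfinal : (∫ t, (∫ τ, ρ τ * F (τ, t)) ∂ν)
      = (∫ t in (0:ℝ)..1, H t (ℓ t))
        - ∫ τ : ℝ, deriv ρ τ * ∫ t in (0:ℝ)..1, H t (u (τ, t)) := by
    rw [MeasureTheory.integral_congr_ae haeeq, MeasureTheory.integral_sub hint1 hint2,
      hIcc, hswap2]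
    congr 1
    refine MeasureTheory.integral_congr_ae (Filter.Eventually.of_forall fun τ => ?_)
    show (∫ t, deriv ρ τ * H t (u (τ, t)) ∂ν) = deriv ρ τ * ∫ t in (0:ℝ)..1, H t (u (τ, t))
    rw [integral_const_mul, hIcc]
  rw [hstep1, hswap1, hfinal]
  ring


end
end

section
/- Action change bound for ρ₊ (Corollary 5.3, first inequality, transcribed to ℂⁿ): Let H : [0,1] × ℂⁿ → ℝ be a smooth compactly supported Hamiltonian and ρ₊ an elongation function of type ρ₊. Let u : ℝ × [0,1] → ℂⁿ be a smooth map solving ∂u/∂τ + i(∂u/∂t − ρ₊(τ)X_{H_t}(u(τ,t))) = 0 with finite energy E_{(H,ρ₊)}(u) < ∞. Assume that u(τ,·) converges uniformly on [0,1] as τ → +∞ to a continuous path ℓ₊ : [0,1] → ℂⁿ, that the improper integral ∫u*ω converges, and that ∫_{ℝ×[0,1]} |dH_t(u(τ,t))[∂u/∂τ(τ,t)]| dτ dt < ∞. Then ∫u*ω + ∫₀¹ H(t, ℓ₊(t)) dt ≥ ∫₀¹ inf_x H(t,x) dt = −E⁻(H). -/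
open MeasureTheory Set Filter Topology

noncomputable section

/-! ### Auxiliary lemmas -/

lemma innerR_eq {n : ℕ} (v w : CE n) : (inner (𝕜:=ℝ) v w : ℝ) = Complex.re (inner (𝕜:=ℂ) v w) := by
  simp [PiLp.inner_apply, Complex.inner, RCLike.inner_apply, Complex.re_sum]

lemma innerR_I_negI {n : ℕ} (a b : CE n) :
    (inner (𝕜:=ℝ) ((Complex.I:ℂ) • a) ((-Complex.I:ℂ) • b) : ℝ) = - inner (𝕜:=ℝ) a b := by
  rw [innerR_eq, innerR_eq, inner_smul_left, inner_smul_right]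
  simp [Complex.conj_I]

lemma innerR_I_I {n : ℕ} (a b : CE n) :
    (inner (𝕜:=ℝ) ((Complex.I:ℂ) • a) ((Complex.I:ℂ) • b) : ℝ) = inner (𝕜:=ℝ) a b := by
  rw [innerR_eq, innerR_eq, inner_smul_left, inner_smul_right]
  simp [Complex.conj_I]

lemma diffH {n : ℕ} {H : ℝ → CE n → ℝ} (hH : ContDiff ℝ (⊤ : ℕ∞) (Function.uncurry H)) (t : ℝ) :
    Differentiable ℝ (H t) := fun x =>
  ((hH.differentiable (by simp)) (t, x)).comp x ((differentiableAt_const t).prodMk differentiableAt_id)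

lemma mono_deriv_nonneg {ρ : ℝ → ℝ} {τ : ℝ} (hm : Monotone ρ) (hd : DifferentiableAt ℝ ρ τ) :
    0 ≤ deriv ρ τ := by
  have h := hd.hasDerivAt
  rw [hasDerivAt_iff_tendsto_slope] at h
  have h' : Tendsto (slope ρ τ) (𝓝[>] τ) (𝓝 (deriv ρ τ)) :=
    h.mono_left (nhdsWithin_mono _ (fun y hy => ne_of_gt hy))
  refine ge_of_tendsto h' (eventually_nhdsWithin_of_forall fun y hy => ?_)
  rw [slope_def_field]
  exact div_nonneg (sub_nonneg.2 (hm hy.le)) (sub_nonneg.2 hy.le)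

lemma deriv_rho_zero_gt {ρ : ℝ → ℝ} (hρ : IsElongationPlus ρ) {τ : ℝ} (hτ : 1 < τ) :
    deriv ρ τ = 0 := by
  have : ρ =ᶠ[nhds τ] fun _ => 1 :=
    Filter.eventuallyEq_of_mem (Ioi_mem_nhds hτ) (fun y hy => hρ.one y (le_of_lt hy))
  rw [this.deriv_eq, deriv_const]

lemma rho_deriv_mul_integrableOn {ρ : ℝ → ℝ} (hρ : IsElongationPlus ρ) {g : ℝ → ℝ}
    (hg : Continuous g) : IntegrableOn (fun τ => deriv ρ τ * g τ) (Ioi (0:ℝ)) := by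
  have hcont : Continuous fun τ => deriv ρ τ * g τ :=
    (hρ.smooth.continuous_deriv (by simp)).mul hg
  rw [← Ioc_union_Ioi_eq_Ioi (zero_le_one (α := ℝ))]
  refine IntegrableOn.union ((hcont.integrableOn_Icc).mono_set Ioc_subset_Icc_self) ?_
  refine (integrableOn_zero).congr_fun (fun τ hτ => ?_) measurableSet_Ioi
  rw [deriv_rho_zero_gt hρ hτ, zero_mul]

lemma pointwise_id {n : ℕ} (H : ℝ → CE n → ℝ) (ρ : ℝ → ℝ) (u : ℝ × ℝ → CE n)
    (hHsmooth : ContDiff ℝ (⊤ : ℕ∞) (Function.uncurry H))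
    (hpde : SolvesCR H ρ u) (p : ℝ × ℝ) (hp : p.2 ∈ Set.Icc (0:ℝ) 1) :
    symp (d1 u p) (d2 u p)
      = ‖d1 u p‖^2 - ρ p.1 * fderiv ℝ (H p.2) (u p) (d1 u p) := by
  have h := hpde p hp
  set A := d1 u p with hA
  set B := d2 u p - ρ p.1 • hamVF H p.2 (u p) with hB
  have hIB : (Complex.I : ℂ) • A = B := by
    have := congrArg (fun v => (Complex.I : ℂ) • v) h
    simp only [smul_add, smul_zero, smul_smul, Complex.I_mul_I, neg_one_smul] at this
    linear_combination (norm := module) this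
  have hd2 : d2 u p = ρ p.1 • hamVF H p.2 (u p) + (Complex.I : ℂ) • A := by
    rw [hIB, hB]; abel
  have hgrad : fderiv ℝ (H p.2) (u p) A = inner (𝕜:=ℝ) (gradient (H p.2) (u p)) A := by
    have h' := ((diffH hHsmooth p.2) (u p)).hasGradientAt.hasFDerivAt
    rw [h'.fderiv]; simp [InnerProductSpace.toDual_apply_apply]
  rw [symp, hd2, inner_add_right, innerR_I_I, real_inner_self_eq_norm_sq]
  rw [real_inner_smul_right, hamVF, innerR_I_negI, hgrad, real_inner_comm]
  ring

lemma slice_bound {n : ℕ} (H : ℝ → CE n → ℝ) (ρ : ℝ → ℝ) (u : ℝ × ℝ → CE n) (ℓ : ℝ → CE n)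
    {C : ℝ} (hHsmooth : ContDiff ℝ (⊤ : ℕ∞) (Function.uncurry H))
    (hbd : ∀ s x, -C ≤ H s x)
    (hρ : IsElongationPlus ρ) (hu : ContDiff ℝ (⊤ : ℕ∞) u)
    (hconv : TendstoUniformlyOn (fun τ t => u (τ, t)) ℓ Filter.atTop (Set.Icc 0 1))
    (t : ℝ) (ht : t ∈ Set.Icc (0:ℝ) 1)
    (hInt : Integrable (fun τ => ρ τ * fderiv ℝ (H t) (u (τ,t)) (d1 u (τ,t)))) :
    (∫ τ : ℝ, ρ τ * fderiv ℝ (H t) (u (τ,t)) (d1 u (τ,t)))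
      ≤ H t (ℓ t) - ⨅ x : CE n, H t x := by
  set w : ℝ → CE n := fun τ => u (τ, t) with hw
  set f : ℝ → ℝ := fun τ => H t (w τ) with hf
  set f' : ℝ → ℝ := fun τ => fderiv ℝ (H t) (w τ) (d1 u (τ,t)) with hf'
  set c : ℝ := ⨅ x : CE n, H t x with hc
  have hwd : ∀ τ, HasDerivAt w (d1 u (τ,t)) τ := by
    intro τ
    have hdiff : Differentiable ℝ w :=
      (hu.differentiable (by simp)).comp (differentiable_id.prodMk (differentiable_const t))
    exact (hdiff τ).hasDerivAt
  have hfd : ∀ τ, HasDerivAt f (f' τ) τ := fun τ =>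
    (((diffH hHsmooth t) (w τ)).hasFDerivAt).comp_hasDerivAt τ (hwd τ)
  have hρdiff : Differentiable ℝ ρ := hρ.smooth.differentiable (by simp)
  have hFd : ∀ τ, HasDerivAt (fun τ => ρ τ * f τ) (deriv ρ τ * f τ + ρ τ * f' τ) τ :=
    fun τ => ((hρdiff τ).hasDerivAt).mul (hfd τ)
  have hfcont : Continuous f :=
    (diffH hHsmooth t).continuous.comp
      ((hu.continuous).comp (continuous_id.prodMk continuous_const))
  have hρ'f_int : IntegrableOn (fun τ => deriv ρ τ * f τ) (Ioi (0:ℝ)) :=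
    rho_deriv_mul_integrableOn hρ hfcont
  have hρf'_int : IntegrableOn (fun τ => ρ τ * f' τ) (Ioi (0:ℝ)) := hInt.integrableOn
  have hF'int : IntegrableOn (fun τ => deriv ρ τ * f τ + ρ τ * f' τ) (Ioi (0:ℝ)) :=
    hρ'f_int.add hρf'_int
  have hwtend : Tendsto w atTop (𝓝 (ℓ t)) := hconv.tendsto_at ht
  have hftend : Tendsto f atTop (𝓝 (H t (ℓ t))) :=
    (((diffH hHsmooth t).continuous.tendsto (ℓ t)).comp hwtend)
  have hFtend : Tendsto (fun τ => ρ τ * f τ) atTop (𝓝 (H t (ℓ t))) := by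
    apply hftend.congr'
    filter_upwards [Filter.eventually_ge_atTop (1:ℝ)] with τ hτ
    rw [hρ.one τ hτ, one_mul]
  have hFcont : Continuous (fun τ => ρ τ * f τ) := (hρ.smooth.continuous).mul hfcont
  have hFTC : (∫ τ in Ioi (0:ℝ), (deriv ρ τ * f τ + ρ τ * f' τ)) = H t (ℓ t) := by
    rw [integral_Ioi_of_hasDerivAt_of_tendsto hFcont.continuousWithinAt
      (fun x _ => hFd x) hF'int hFtend, hρ.zero 0 le_rfl]
    ring
  have hsplit : (∫ τ in Ioi (0:ℝ), (deriv ρ τ * f τ + ρ τ * f' τ))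
      = (∫ τ in Ioi (0:ℝ), deriv ρ τ * f τ) + (∫ τ in Ioi (0:ℝ), ρ τ * f' τ) :=
    integral_add hρ'f_int hρf'_int
  have hwhole : (∫ τ in Ioi (0:ℝ), ρ τ * f' τ) = ∫ τ : ℝ, ρ τ * f' τ := by
    refine setIntegral_eq_integral_of_forall_compl_eq_zero (fun τ hτ => ?_)
    rw [hρ.zero τ (le_of_not_gt hτ), zero_mul]
  have hρ'int : IntegrableOn (deriv ρ) (Ioi (0:ℝ)) := by
    have := rho_deriv_mul_integrableOn hρ continuous_const (g := fun _ => (1:ℝ))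
    simpa using this
  have hρtend : Tendsto ρ atTop (𝓝 (1:ℝ)) := by
    apply tendsto_const_nhds.congr'
    filter_upwards [Filter.eventually_ge_atTop (1:ℝ)] with τ hτ
    exact (hρ.one τ hτ).symm
  have hρ'total : (∫ τ in Ioi (0:ℝ), deriv ρ τ) = 1 := by
    rw [integral_Ioi_of_hasDerivAt_of_tendsto (hρ.smooth.continuous).continuousWithinAt
      (fun x _ => (hρdiff x).hasDerivAt) hρ'int hρtend, hρ.zero 0 le_rfl]
    ring
  have hbdd : BddBelow (Set.range fun x : CE n => H t x) :=
    ⟨-C, fun y ⟨x, hx⟩ => hx ▸ hbd t x⟩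
  have hcle : ∀ τ, c ≤ f τ := fun τ => ciInf_le hbdd (w τ)
  have hlow : c ≤ ∫ τ in Ioi (0:ℝ), deriv ρ τ * f τ := by
    have h0 : 0 ≤ ∫ τ in Ioi (0:ℝ), deriv ρ τ * (f τ - c) := by
      refine setIntegral_nonneg measurableSet_Ioi (fun τ _ => ?_)
      exact mul_nonneg (mono_deriv_nonneg hρ.mono (hρdiff τ)) (sub_nonneg.2 (hcle τ))
    have heq : (∫ τ in Ioi (0:ℝ), deriv ρ τ * (f τ - c))
        = (∫ τ in Ioi (0:ℝ), deriv ρ τ * f τ) - c * ∫ τ in Ioi (0:ℝ), deriv ρ τ := by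
      have hptw : ∀ τ, deriv ρ τ * (f τ - c) = deriv ρ τ * f τ - c * deriv ρ τ :=
        fun τ => by ring
      simp_rw [hptw]
      rw [integral_sub hρ'f_int (hρ'int.const_mul c), MeasureTheory.integral_const_mul]
    rw [heq, hρ'total, mul_one] at h0
    linarith
  have key : (∫ τ : ℝ, ρ τ * f' τ) = H t (ℓ t) - ∫ τ in Ioi (0:ℝ), deriv ρ τ * f τ := by
    rw [← hwhole]; linarith [hFTC, hsplit]
  show (∫ τ : ℝ, ρ τ * f' τ) ≤ H t (ℓ t) - c
  rw [key]
  linarith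

/-- Corollary 5.3, first inequality: for finite-energy solutions of the
`ρ₊`-perturbed Cauchy–Riemann equation,
`∫u*ω + ∫₀¹ H(t, ℓ₊(t)) dt ≥ ∫₀¹ inf_x H(t,x) dt = −E⁻(H)`. -/
theorem action_bound_rho_plus {n : ℕ} (H : ℝ → CE n → ℝ) (ρ : ℝ → ℝ) (u : ℝ × ℝ → CE n)
    (ℓ : ℝ → CE n)
    (hHsmooth : ContDiff ℝ (⊤ : ℕ∞) (Function.uncurry H))
    (hHsupp : HasCompactSupport (Function.uncurry H))
    (hρ : IsElongationPlus ρ)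
    (hu : ContDiff ℝ (⊤ : ℕ∞) u)
    (hpde : SolvesCR H ρ u)
    (hfin : IntegrableOn (enDensity H ρ u) strip)
    (harea : IntegrableOn (fun p => symp (d1 u p) (d2 u p)) strip)
    (hdH : IntegrableOn (fun p => fderiv ℝ (H p.2) (u p) (d1 u p)) strip)
    (hℓ : Continuous ℓ)
    (hconv : TendstoUniformlyOn (fun τ t => u (τ, t)) ℓ Filter.atTop (Set.Icc 0 1)) :
    (area u + (∫ t in (0:ℝ)..1, H t (ℓ t)) ≥ ∫ t in (0:ℝ)..1, ⨅ x : CE n, H t x) ∧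
      ((∫ t in (0:ℝ)..1, ⨅ x : CE n, H t x) = -Eminus H) := by
  constructor
  · -- the main inequality
    obtain ⟨C, hC⟩ := hHsupp.exists_bound_of_continuous hHsmooth.continuous
    have hbd : ∀ s x, -C ≤ H s x := fun s x => by
      have := hC (s, x)
      rw [Real.norm_eq_abs] at this
      exact (abs_le.1 this).1
    obtain ⟨L, hLip⟩ := ContDiff.lipschitzWith_of_hasCompactSupport hHsupp hHsmooth (by simp)
    set c : ℝ → ℝ := fun t => ⨅ x : CE n, H t x with hcdef
    have hbdd : ∀ t, BddBelow (Set.range fun x : CE n => H t x) := fun t =>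
      ⟨-C, fun y ⟨x, hx⟩ => hx ▸ hbd t x⟩
    have hckey : ∀ s t : ℝ, c s ≤ c t + (L : ℝ) * dist s t := by
      intro s t
      have : ∀ x : CE n, c s - (L : ℝ) * dist s t ≤ H t x := by
        intro x
        have h1 : c s ≤ H s x := ciInf_le (hbdd s) x
        have h2 := hLip.dist_le_mul (s, x) (t, x)
        simp only [Function.uncurry_apply_pair] at h2
        have h3 : dist ((s : ℝ), x) (t, x) = dist s t := by
          rw [Prod.dist_eq]
          simp [max_eq_left dist_nonneg]
        rw [h3, Real.dist_eq] at h2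
        have := (abs_le.1 h2).2
        linarith
      have := le_ciInf this
      linarith [this]
    have hclip : LipschitzWith L c := by
      apply LipschitzWith.of_dist_le_mul
      intro s t
      rw [Real.dist_eq, abs_le]
      constructor
      · have := hckey t s; rw [dist_comm] at this; linarith
      · have := hckey s t; linarith
    -- the pointwise identity and basic integrabilities
    set h : ℝ × ℝ → ℝ := fun p => ρ p.1 * fderiv ℝ (H p.2) (u p) (d1 u p) with hhdef
    have hmeas_strip : MeasurableSet strip := MeasurableSet.univ.prod measurableSet_Icc
    have hh_int : IntegrableOn h strip := by
      refine Integrable.bdd_mul (c := 1) hdH (((hρ.smooth.continuous).comp continuous_fst).aestronglyMeasurable) (Filter.Eventually.of_forall fun p => ?_)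
      rw [Real.norm_eq_abs, abs_le]
      exact ⟨by linarith [(hρ.mem p.1).1], (hρ.mem p.1).2⟩
    have harea_ge : -∫ p in strip, h p ≤ area u := by
      rw [← MeasureTheory.integral_neg]
      refine setIntegral_mono_on hh_int.neg harea hmeas_strip (fun p hp => ?_)
      have hpt := pointwise_id H ρ u hHsmooth hpde p hp.2
      have : (0:ℝ) ≤ ‖d1 u p‖^2 := sq_nonneg _
      rw [hpt]
      simp only [hhdef]
      linarith
    -- Fubini
    set ν : Measure ℝ := volume.restrict (Icc (0:ℝ) 1) with hν
    have hrestr : (volume : Measure (ℝ × ℝ)).restrict strip = (volume : Measure ℝ).prod ν := by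
      rw [MeasureTheory.Measure.volume_eq_prod, show strip = Set.univ ×ˢ Set.Icc (0:ℝ) 1 from rfl, ← Measure.prod_restrict, Measure.restrict_univ]
    have hprod : Integrable h ((volume : Measure ℝ).prod ν) := by
      rw [← hrestr]; exact hh_int
    have hswap : Integrable (fun z : ℝ × ℝ => h z.swap) (ν.prod volume) := hprod.swap
    have hfub : (∫ p in strip, h p) = ∫ t, (∫ τ, h (τ, t)) ∂ν := by
      calc (∫ p in strip, h p) = ∫ z, h z ∂((volume : Measure ℝ).prod ν) := by rw [hrestr]
        _ = ∫ z, h z.swap ∂(ν.prod volume) := (integral_prod_swap h).symm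
        _ = ∫ t, (∫ τ, h (τ, t)) ∂ν := integral_prod _ hswap
    have hae_slice : ∀ᵐ t ∂ν, Integrable (fun τ => h (τ, t)) volume := by
      have := hswap.prod_right_ae
      simpa using this
    have hG_int : Integrable (fun t => ∫ τ, h (τ, t)) ν := by
      have := hswap.integral_prod_left
      simpa using this
    -- the slice bound
    have hGle : ∀ᵐ t ∂ν, (∫ τ, h (τ, t)) ≤ H t (ℓ t) - c t := by
      filter_upwards [hae_slice, ae_restrict_mem measurableSet_Icc] with t h1 h2
      exact slice_bound H ρ u ℓ hHsmooth hbd hρ hu hconv t h2 h1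
    -- integrability of the bound
    have hHl_cont : Continuous fun t => H t (ℓ t) :=
      hHsmooth.continuous.comp (continuous_id.prodMk hℓ)
    have hHl_int : Integrable (fun t => H t (ℓ t)) ν := hHl_cont.integrableOn_Icc
    have hc_int : Integrable c ν := hclip.continuous.integrableOn_Icc
    have hbd_int : Integrable (fun t => H t (ℓ t) - c t) ν := hHl_int.sub hc_int
    have hmain : (∫ t, (∫ τ, h (τ, t)) ∂ν) ≤ ∫ t, (H t (ℓ t) - c t) ∂ν :=
      integral_mono_ae hG_int hbd_int hGle
    have hsub : (∫ t, (H t (ℓ t) - c t) ∂ν) = (∫ t, H t (ℓ t) ∂ν) - ∫ t, c t ∂ν :=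
      integral_sub hHl_int hc_int
    -- convert interval integrals
    have hIcc1 : (∫ t in (0:ℝ)..1, H t (ℓ t)) = ∫ t, H t (ℓ t) ∂ν := by
      rw [intervalIntegral.integral_of_le zero_le_one, hν, ← integral_Icc_eq_integral_Ioc]
    have hIcc2 : (∫ t in (0:ℝ)..1, ⨅ x : CE n, H t x) = ∫ t, c t ∂ν := by
      rw [intervalIntegral.integral_of_le zero_le_one, hν, ← integral_Icc_eq_integral_Ioc]
    rw [ge_iff_le, hIcc1, hIcc2]
    have : (∫ p in strip, h p) ≤ (∫ t, H t (ℓ t) ∂ν) - ∫ t, c t ∂ν := by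
      rw [← hsub, hfub]; exact hmain
    linarith [harea_ge]
  · simp [Eminus]

end
end

section
/- Coordinate change preserves the action functional up to a constant (Lemma 4.2 / Lemma lem:gH0+, transcribed to ℂⁿ): Let H : [0,1] × ℂⁿ → ℝ be a smooth compactly supported Hamiltonian with flow φ_H^t. Let w′ : [0,1] × [0,1] → ℂⁿ be any smooth map and define w(s,t) := φ_H^t((φ_H^1)⁻¹(w′(s,t))). Then ∫_{[0,1]²} w*ω + ∫₀¹ H(t, w(1,t)) dt = ∫_{[0,1]²} (w′)*ω + ∫₀¹ H(t, w(0,t)) dt, where for a smooth map v : [0,1]² → ℂⁿ, ∫v*ω = ∫_{[0,1]²} ω(∂v/∂s, ∂v/∂t) ds dt. -/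
open MeasureTheory Set Filter

noncomputable section

/-- The unit square `[0,1] × [0,1]`. -/
def square : Set (ℝ × ℝ) := Set.Icc (0 : ℝ) 1 ×ˢ Set.Icc (0 : ℝ) 1

/-- The symplectic area `∫ v*ω` of a map of the unit square. -/
def areaSq {n : ℕ} (v : ℝ × ℝ → CE n) : ℝ := ∫ p in square, symp (d1 v p) (d2 v p)

lemma real_inner_re {n : ℕ} (x y : CE n) :
    inner (𝕜 := ℝ) x y = (inner (𝕜 := ℂ) x y).re := by
  simp [PiLp.inner_apply, Complex.inner, map_sum]

lemma symp_neg_I_left {n : ℕ} (g b : CE n) :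
    symp ((-Complex.I : ℂ) • g) b = inner (𝕜 := ℝ) g b := by
  rw [symp, smul_smul]; norm_num

lemma symp_neg_I_right {n : ℕ} (a g : CE n) :
    symp a ((-Complex.I : ℂ) • g) = -inner (𝕜 := ℝ) a g := by
  rw [symp, real_inner_re, real_inner_re, inner_smul_left, inner_smul_right]
  simp

lemma symp_add_right {n : ℕ} (a x y : CE n) : symp a (x + y) = symp a x + symp a y := by
  rw [symp, symp, symp, inner_add_right]

lemma inner_gradient {n : ℕ} (f : CE n → ℝ) (x v : CE n) :
    inner (𝕜 := ℝ) (gradient f x) v = fderiv ℝ f x v := by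
  rw [gradient]; exact InnerProductSpace.toDual_symm_apply

lemma fderiv_partial_snd {E F : Type*} [NormedAddCommGroup E] [NormedSpace ℝ E]
    [NormedAddCommGroup F] [NormedSpace ℝ F]
    {f : ℝ × E → F} {t : ℝ} {x : E} (hf : DifferentiableAt ℝ f (t, x)) (v : E) :
    fderiv ℝ (fun y => f (t, y)) x v = fderiv ℝ f (t, x) (0, v) := by
  have h := (hf.hasFDerivAt.comp x (hasFDerivAt_prodMk_right t x)).fderiv
  rw [show (fun y => f (t, y)) = f ∘ (fun y : E => (t, y)) from rfl, h]
  rfl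

lemma myGradientEq {n : ℕ} (H : ℝ → CE n → ℝ) (hH : ContDiff ℝ (⊤ : ℕ∞) (Function.uncurry H))
    (t : ℝ) (x : CE n) :
    gradient (H t) x = (InnerProductSpace.toDual ℝ (CE n)).symm
      ((fderiv ℝ (Function.uncurry H) (t, x)).comp (ContinuousLinearMap.inr ℝ ℝ (CE n))) := by
  rw [gradient]
  congr 1
  have hd : DifferentiableAt ℝ (Function.uncurry H) (t, x) := (hH.differentiable (by simp)) _
  exact (hd.hasFDerivAt.comp x (hasFDerivAt_prodMk_right t x)).fderiv

lemma grad_smooth {n : ℕ} (H : ℝ → CE n → ℝ) (hH : ContDiff ℝ (⊤ : ℕ∞) (Function.uncurry H)) :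
    ContDiff ℝ (⊤ : ℕ∞) (fun p : ℝ × CE n => gradient (H p.1) p.2) := by
  have : (fun p : ℝ × CE n => gradient (H p.1) p.2)
      = fun p : ℝ × CE n => (InnerProductSpace.toDual ℝ (CE n)).symm
        ((fderiv ℝ (Function.uncurry H) p).comp (ContinuousLinearMap.inr ℝ ℝ (CE n))) := by
    funext p; exact myGradientEq H hH p.1 p.2
  rw [this]
  apply (InnerProductSpace.toDual ℝ (CE n)).symm.contDiff.comp
  exact (hH.fderiv_right (by simp)).clm_comp contDiff_const

lemma hamVF_smooth {n : ℕ} (H : ℝ → CE n → ℝ) (hH : ContDiff ℝ (⊤ : ℕ∞) (Function.uncurry H)) :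
    ContDiff ℝ (⊤ : ℕ∞) (fun p : ℝ × CE n => hamVF H p.1 p.2) :=
  (grad_smooth H hH).const_smul (-Complex.I : ℂ)

lemma grad_smooth' {n : ℕ} (f : CE n → ℝ) (hf : ContDiff ℝ (⊤ : ℕ∞) f) :
    ContDiff ℝ (⊤ : ℕ∞) (gradient f) := by
  have h := grad_smooth (fun _ : ℝ => f) (hf.comp contDiff_snd)
  exact h.comp ((contDiff_const (c := (0:ℝ))).prodMk contDiff_id)

lemma inner_fderiv_gradient {n : ℕ} (f : CE n → ℝ) (hf : ContDiff ℝ (⊤ : ℕ∞) f) (x a b : CE n) :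
    inner (𝕜 := ℝ) (fderiv ℝ (gradient f) x a) b = fderiv ℝ (fderiv ℝ f) x a b := by
  have hdf : DifferentiableAt ℝ (fderiv ℝ f) x :=
    ((hf.fderiv_right (m := (⊤ : ℕ∞)) (by simp)).differentiable (by simp)) x
  have hg : DifferentiableAt ℝ (gradient f) x := ((grad_smooth' f hf).differentiable (by simp)) x
  have h1 : fderiv ℝ (fun y => (innerSL ℝ b) (gradient f y)) x a
      = inner (𝕜 := ℝ) b (fderiv ℝ (gradient f) x a) := by
    rw [show (fun y => (innerSL ℝ b) (gradient f y)) = (⇑(innerSL ℝ b)) ∘ gradient f from rfl,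
      ((innerSL ℝ b).hasFDerivAt.comp x hg.hasFDerivAt).fderiv]; rfl
  have h2 : fderiv ℝ (fun y => (ContinuousLinearMap.apply ℝ ℝ b) (fderiv ℝ f y)) x a
      = fderiv ℝ (fderiv ℝ f) x a b := by
    rw [show (fun y => (ContinuousLinearMap.apply ℝ ℝ b) (fderiv ℝ f y))
        = (⇑(ContinuousLinearMap.apply ℝ ℝ b)) ∘ fderiv ℝ f from rfl,
      ((ContinuousLinearMap.apply ℝ ℝ b).hasFDerivAt.comp x hdf.hasFDerivAt).fderiv]; rfl
  have h3 : (fun y => (innerSL ℝ b) (gradient f y))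
      = fun y => (ContinuousLinearMap.apply ℝ ℝ b) (fderiv ℝ f y) := by
    funext y
    show inner (𝕜 := ℝ) b (gradient f y) = fderiv ℝ f y b
    rw [real_inner_comm]; exact inner_gradient f y b
  rw [real_inner_comm, ← h1, h3, h2]

lemma hess_symm {n : ℕ} (f : CE n → ℝ) (hf : ContDiff ℝ (⊤ : ℕ∞) f) (x a b : CE n) :
    inner (𝕜 := ℝ) (fderiv ℝ (gradient f) x a) b
      = inner (𝕜 := ℝ) (fderiv ℝ (gradient f) x b) a := by
  rw [inner_fderiv_gradient f hf, inner_fderiv_gradient f hf]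
  exact (hf.contDiffAt.isSymmSndFDerivAt (by rw [minSmoothness_of_isRCLikeNormedField]; exact WithTop.coe_le_coe.mpr le_top)).eq a b

lemma Ht_smooth {n : ℕ} (H : ℝ → CE n → ℝ) (hH : ContDiff ℝ (⊤ : ℕ∞) (Function.uncurry H)) (t : ℝ) :
    ContDiff ℝ (⊤ : ℕ∞) (H t) := by
  have := hH.comp ((contDiff_const (c := t)).prodMk (contDiff_id (E := CE n)))
  exact this

lemma hamVF_skew {n : ℕ} (H : ℝ → CE n → ℝ) (hH : ContDiff ℝ (⊤ : ℕ∞) (Function.uncurry H))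
    (t : ℝ) (x a b : CE n) :
    symp (fderiv ℝ (hamVF H t) x a) b + symp a (fderiv ℝ (hamVF H t) x b) = 0 := by
  have hHt := Ht_smooth H hH t
  have hgd : DifferentiableAt ℝ (gradient (H t)) x :=
    ((grad_smooth' _ hHt).differentiable (by simp)) x
  have hF : fderiv ℝ (hamVF H t) x = (-Complex.I : ℂ) • fderiv ℝ (gradient (H t)) x := by
    rw [show hamVF H t = fun y => (-Complex.I : ℂ) • gradient (H t) y from rfl,
      fderiv_fun_const_smul hgd]
  rw [hF]
  rw [ContinuousLinearMap.smul_apply, ContinuousLinearMap.smul_apply,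
    symp_neg_I_left, symp_neg_I_right]
  have hcomm := real_inner_comm a ((fderiv ℝ (gradient (H t)) x) b)
  have hsym := hess_symm (H t) hHt x b a
  linarith

lemma symp_hamVF_right {n : ℕ} (H : ℝ → CE n → ℝ) (t : ℝ) (x a : CE n) :
    symp a (hamVF H t x) = -(fderiv ℝ (H t) x a) := by
  rw [hamVF, symp_neg_I_right, real_inner_comm, inner_gradient]

lemma flow_fderiv_time {n : ℕ} (H : ℝ → CE n → ℝ) (ψ : ℝ × CE n → CE n)
    (hψ : ContDiff ℝ (⊤ : ℕ∞) ψ)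
    (hflow : ∀ t y, HasDerivAt (fun s => ψ (s, y)) (hamVF H t (ψ (t, y))) t)
    (q : ℝ × CE n) : fderiv ℝ ψ q (1, 0) = hamVF H q.1 (ψ q) := by
  have h1 : HasDerivAt (fun s => ψ (s, q.2)) (fderiv ℝ ψ q (1, 0)) q.1 := by
    have := ((hψ.differentiable (by simp)) q).hasFDerivAt.comp_hasDerivAt q.1
      ((hasDerivAt_id q.1).prodMk (hasDerivAt_const q.1 q.2))
    exact this
  have h2 := hflow q.1 q.2
  simpa using h1.unique h2

lemma flow_symplectic {n : ℕ} (H : ℝ → CE n → ℝ) (hH : ContDiff ℝ (⊤ : ℕ∞) (Function.uncurry H))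
    (ψ : ℝ × CE n → CE n) (hψ : ContDiff ℝ (⊤ : ℕ∞) ψ)
    (hflow : ∀ t y, HasDerivAt (fun s => ψ (s, y)) (hamVF H t (ψ (t, y))) t)
    (hψ1 : ∀ y, ψ (1, y) = y) (t : ℝ) (y : CE n) (v u : CE n) :
    symp (fderiv ℝ ψ (t, y) (0, v)) (fderiv ℝ ψ (t, y) (0, u)) = symp v u := by
  have hXs : ContDiff ℝ (⊤ : ℕ∞) (fun p : ℝ × CE n => hamVF H p.1 p.2) := hamVF_smooth H hH
  have hΦ : ContDiff ℝ (⊤ : ℕ∞) (fderiv ℝ ψ) := hψ.fderiv_right (by simp)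
  set Φ := fderiv ℝ ψ with hΦdef
  have hflow' : ∀ q : ℝ × CE n, Φ q (1, 0) = hamVF H q.1 (ψ q) :=
    flow_fderiv_time H ψ hψ hflow
  -- key derivative computation
  have key : ∀ (v : CE n) (s : ℝ), HasDerivAt (fun r => Φ (r, y) (0, v))
      (fderiv ℝ (hamVF H s) (ψ (s, y)) (Φ (s, y) (0, v))) s := by
    intro v s
    have h1 : HasDerivAt (fun r => Φ (r, y)) (fderiv ℝ Φ (s, y) (1, 0)) s := by
      have := ((hΦ.differentiable (by simp)) (s, y)).hasFDerivAt.comp_hasDerivAt s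
        ((hasDerivAt_id s).prodMk (hasDerivAt_const s y))
      exact this
    have h2 : HasDerivAt (fun r => Φ (r, y) (0, v)) ((fderiv ℝ Φ (s, y) (1, 0)) (0, v)) s := by
      have := h1.clm_apply (hasDerivAt_const s ((0, v) : ℝ × CE n))
      simpa using this
    have hsymm : (fderiv ℝ Φ (s, y) (1, 0)) (0, v) = (fderiv ℝ Φ (s, y) (0, v)) (1, 0) :=
      (hψ.contDiffAt.isSymmSndFDerivAt (by rw [minSmoothness_of_isRCLikeNormedField]; exact WithTop.coe_le_coe.mpr le_top)).eq (1, 0) (0, v)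
    have h3 : fderiv ℝ (fun p => Φ p ((1 : ℝ), (0 : CE n))) (s, y)
        = (ContinuousLinearMap.apply ℝ (CE n) ((1 : ℝ), (0 : CE n))).comp (fderiv ℝ Φ (s, y)) := by
      rw [show (fun p => Φ p ((1 : ℝ), (0 : CE n)))
          = (⇑(ContinuousLinearMap.apply ℝ (CE n) ((1 : ℝ), (0 : CE n)))) ∘ Φ from rfl]
      exact ((ContinuousLinearMap.apply ℝ (CE n) _).hasFDerivAt.comp _
        ((hΦ.differentiable (by simp)) _).hasFDerivAt).fderiv
    have hVeq : (fun p : ℝ × CE n => Φ p ((1 : ℝ), (0 : CE n)))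
        = fun p => hamVF H p.1 (ψ p) := funext hflow'
    have h4 : fderiv ℝ (fun p : ℝ × CE n => hamVF H p.1 (ψ p)) (s, y) (0, v)
        = fderiv ℝ (hamVF H s) (ψ (s, y)) (Φ (s, y) (0, v)) := by
      have hin : HasFDerivAt (fun p : ℝ × CE n => (p.1, ψ p))
          ((ContinuousLinearMap.fst ℝ ℝ (CE n)).prod (fderiv ℝ ψ (s, y))) (s, y) :=
        (hasFDerivAt_fst).prodMk ((hψ.differentiable (by simp)) _).hasFDerivAt
      have hXd : HasFDerivAt (fun p : ℝ × CE n => hamVF H p.1 p.2)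
          (fderiv ℝ (fun p : ℝ × CE n => hamVF H p.1 p.2) (s, ψ (s, y))) (s, ψ (s, y)) :=
        ((hXs.differentiable (by simp)) _).hasFDerivAt
      have hcomp := (hXd.comp (s, y) hin).fderiv
      rw [show (fun p : ℝ × CE n => hamVF H p.1 (ψ p))
          = (fun p : ℝ × CE n => hamVF H p.1 p.2) ∘ (fun p : ℝ × CE n => (p.1, ψ p)) from rfl,
        hcomp]
      have hpart := fderiv_partial_snd (f := fun p : ℝ × CE n => hamVF H p.1 p.2)
        (t := s) (x := ψ (s, y)) ((hXs.differentiable (by simp)) _) (Φ (s, y) (0, v))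
      show fderiv ℝ (fun p : ℝ × CE n => hamVF H p.1 p.2) (s, ψ (s, y))
          ((0 : ℝ), Φ (s, y) (0, v)) = _
      rw [← hpart]
    rw [show fderiv ℝ (hamVF H s) (ψ (s, y)) (Φ (s, y) (0, v))
        = (fderiv ℝ Φ (s, y) (1, 0)) (0, v) by rw [hsymm, ← h4, ← hVeq]; rw [h3]; rfl]
    exact h2
  -- constancy of the symplectic pairing
  have hc : ∀ s : ℝ, HasDerivAt (fun r => symp (Φ (r, y) (0, v)) (Φ (r, y) (0, u))) 0 s := by
    intro s
    have ha := key v s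
    have hb := key u s
    have hinner := HasDerivAt.inner ℝ (ha.const_smul (Complex.I : ℂ)) hb
    have hval : inner (𝕜 := ℝ) ((Complex.I : ℂ) • Φ (s, y) (0, v))
          (fderiv ℝ (hamVF H s) (ψ (s, y)) (Φ (s, y) (0, u)))
        + inner (𝕜 := ℝ) ((Complex.I : ℂ) • fderiv ℝ (hamVF H s) (ψ (s, y)) (Φ (s, y) (0, v)))
          (Φ (s, y) (0, u)) = 0 := by
      have := hamVF_skew H hH s (ψ (s, y)) (Φ (s, y) (0, v)) (Φ (s, y) (0, u))
      rw [symp, symp] at this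
      linarith
    have h0 : HasDerivAt (fun r => symp (Φ (r, y) (0, v)) (Φ (r, y) (0, u)))
        (inner (𝕜 := ℝ) ((Complex.I : ℂ) • Φ (s, y) (0, v))
          (fderiv ℝ (hamVF H s) (ψ (s, y)) (Φ (s, y) (0, u)))
        + inner (𝕜 := ℝ) ((Complex.I : ℂ) • fderiv ℝ (hamVF H s) (ψ (s, y)) (Φ (s, y) (0, v)))
          (Φ (s, y) (0, u))) s := hinner
    rw [hval] at h0
    exact h0
  have hdiff : Differentiable ℝ (fun r => symp (Φ (r, y) (0, v)) (Φ (r, y) (0, u))) :=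
    fun s => (hc s).differentiableAt
  have hconst := is_const_of_deriv_eq_zero hdiff (fun s => (hc s).deriv) t 1
  have h1v : ∀ v : CE n, Φ (1, y) (0, v) = v := by
    intro v
    have hp := fderiv_partial_snd (f := ψ) (t := 1) (x := y)
      ((hψ.differentiable (by simp)) _) v
    rw [← hp, show (fun z => ψ (1, z)) = id from funext hψ1, fderiv_id]
    rfl
  rw [hconst, h1v, h1v]


lemma hasDerivAt_d1 {n : ℕ} (u : ℝ × ℝ → CE n) (hu : Differentiable ℝ u) (p : ℝ × ℝ) :
    HasDerivAt (fun s => u (s, p.2)) (d1 u p) p.1 := by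
  have h : HasDerivAt (fun s => u (s, p.2)) (fderiv ℝ u p (1, 0)) p.1 := by
    have := (hu p).hasFDerivAt.comp_hasDerivAt p.1
      ((hasDerivAt_id p.1).prodMk (hasDerivAt_const p.1 p.2))
    exact this
  have hd : d1 u p = fderiv ℝ u p (1, 0) := h.deriv
  rw [hd]; exact h

lemma hasDerivAt_d2 {n : ℕ} (u : ℝ × ℝ → CE n) (hu : Differentiable ℝ u) (p : ℝ × ℝ) :
    HasDerivAt (fun t => u (p.1, t)) (d2 u p) p.2 := by
  have h : HasDerivAt (fun t => u (p.1, t)) (fderiv ℝ u p (0, 1)) p.2 := by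
    have := (hu p).hasFDerivAt.comp_hasDerivAt p.2
      ((hasDerivAt_const p.2 p.1).prodMk (hasDerivAt_id p.2))
    exact this
  have hd : d2 u p = fderiv ℝ u p (0, 1) := h.deriv
  rw [hd]; exact h

lemma d1_fderiv {n : ℕ} (u : ℝ × ℝ → CE n) (hu : Differentiable ℝ u) (p : ℝ × ℝ) :
    d1 u p = fderiv ℝ u p (1, 0) := by
  have h : HasDerivAt (fun s => u (s, p.2)) (fderiv ℝ u p (1, 0)) p.1 := by
    have := (hu p).hasFDerivAt.comp_hasDerivAt p.1
      ((hasDerivAt_id p.1).prodMk (hasDerivAt_const p.1 p.2))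
    exact this
  exact h.deriv

lemma d2_fderiv {n : ℕ} (u : ℝ × ℝ → CE n) (hu : Differentiable ℝ u) (p : ℝ × ℝ) :
    d2 u p = fderiv ℝ u p (0, 1) := by
  have h : HasDerivAt (fun t => u (p.1, t)) (fderiv ℝ u p (0, 1)) p.2 := by
    have := (hu p).hasFDerivAt.comp_hasDerivAt p.2
      ((hasDerivAt_const p.2 p.1).prodMk (hasDerivAt_id p.2))
    exact this
  exact h.deriv

lemma pointwise_key {n : ℕ} (H : ℝ → CE n → ℝ) (hH : ContDiff ℝ (⊤ : ℕ∞) (Function.uncurry H))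
    (ψ : ℝ × CE n → CE n) (hψ : ContDiff ℝ (⊤ : ℕ∞) ψ)
    (hflow : ∀ t y, HasDerivAt (fun s => ψ (s, y)) (hamVF H t (ψ (t, y))) t)
    (hψ1 : ∀ y, ψ (1, y) = y)
    (w' : ℝ × ℝ → CE n) (hw' : ContDiff ℝ (⊤ : ℕ∞) w')
    (w : ℝ × ℝ → CE n) (hweq : ∀ p : ℝ × ℝ, w p = ψ (p.2, w' p)) (p : ℝ × ℝ) :
    symp (d1 w p) (d2 w p)
      = symp (d1 w' p) (d2 w' p) - fderiv ℝ (fun q : ℝ × ℝ => H q.2 (w q)) p (1, 0) := by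
  have hws : ContDiff ℝ (⊤ : ℕ∞) w := by
    rw [show w = fun p : ℝ × ℝ => ψ (p.2, w' p) from funext hweq]
    exact hψ.comp (contDiff_snd.prodMk hw')
  have hw'd : Differentiable ℝ w' := hw'.differentiable (by simp)
  have hwd : Differentiable ℝ w := hws.differentiable (by simp)
  set q0 : ℝ × CE n := (p.2, w' p) with hq0
  have hψd := ((hψ.differentiable (by simp)) q0).hasFDerivAt
  -- d1 w p
  have hw1 : d1 w p = fderiv ℝ ψ q0 (0, d1 w' p) := by
    have heq : (fun s => w (s, p.2)) = fun s => ψ (p.2, w' (s, p.2)) :=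
      funext fun s => hweq (s, p.2)
    have hin : HasDerivAt (fun s => ((p.2, w' (s, p.2)) : ℝ × CE n)) (0, d1 w' p) p.1 :=
      (hasDerivAt_const p.1 p.2).prodMk (hasDerivAt_d1 w' hw'd p)
    have h := hψd.comp_hasDerivAt p.1 (by simpa using hin)
    have h2 : HasDerivAt (fun s => w (s, p.2)) (fderiv ℝ ψ q0 (0, d1 w' p)) p.1 := by
      rw [heq]; exact h
    exact h2.deriv
  -- d2 w p
  have hw2 : d2 w p = hamVF H p.2 (w p) + fderiv ℝ ψ q0 (0, d2 w' p) := by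
    have heq : (fun t => w (p.1, t)) = fun t => ψ (t, w' (p.1, t)) :=
      funext fun t => hweq (p.1, t)
    have hin : HasDerivAt (fun t => ((t, w' (p.1, t)) : ℝ × CE n)) (1, d2 w' p) p.2 :=
      (hasDerivAt_id p.2).prodMk (hasDerivAt_d2 w' hw'd p)
    have h := hψd.comp_hasDerivAt p.2 (by simpa using hin)
    have h2 : HasDerivAt (fun t => w (p.1, t)) (fderiv ℝ ψ q0 (1, d2 w' p)) p.2 := by
      rw [heq]; exact h
    have h3 : fderiv ℝ ψ q0 (1, d2 w' p) = hamVF H p.2 (w p) + fderiv ℝ ψ q0 (0, d2 w' p) := by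
      have hsplit : ((1 : ℝ), d2 w' p) = ((1 : ℝ), (0 : CE n)) + ((0 : ℝ), d2 w' p) := by
        simp
      rw [hsplit, map_add, flow_fderiv_time H ψ hψ hflow q0, ← hweq p]
    rw [← h3]; exact h2.deriv
  -- right-hand side derivative term
  have hd1w : d1 w p = fderiv ℝ ψ q0 (0, d1 w' p) := hw1
  have hrhs : fderiv ℝ (fun q : ℝ × ℝ => H q.2 (w q)) p (1, 0)
      = fderiv ℝ (H p.2) (w p) (d1 w p) := by
    have hg : HasFDerivAt (fun q : ℝ × ℝ => ((q.2, w q) : ℝ × CE n))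
        ((ContinuousLinearMap.snd ℝ ℝ ℝ).prod (fderiv ℝ w p)) p :=
      (hasFDerivAt_snd).prodMk (hwd p).hasFDerivAt
    have hHd : HasFDerivAt (Function.uncurry H)
        (fderiv ℝ (Function.uncurry H) (p.2, w p)) (p.2, w p) :=
      ((hH.differentiable (by simp)) _).hasFDerivAt
    have hcomp := (hHd.comp p hg).fderiv
    rw [show (fun q : ℝ × ℝ => H q.2 (w q))
        = Function.uncurry H ∘ (fun q : ℝ × ℝ => ((q.2, w q) : ℝ × CE n)) from rfl, hcomp]
    have : ((ContinuousLinearMap.snd ℝ ℝ ℝ).prod (fderiv ℝ w p)) ((1 : ℝ), (0 : ℝ))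
        = ((0 : ℝ), fderiv ℝ w p (1, 0)) := by simp
    rw [ContinuousLinearMap.coe_comp', Function.comp_apply, this, ← d1_fderiv w hwd p]
    exact (fderiv_partial_snd ((hH.differentiable (by simp)) _) (d1 w p)).symm
  -- assemble
  rw [hw1, hw2, symp_add_right, hrhs, hw1]
  have hsympl := flow_symplectic H hH ψ hψ hflow hψ1 p.2 (w' p) (d1 w' p) (d2 w' p)
  have hham := symp_hamVF_right H p.2 (w p) (fderiv ℝ ψ q0 (0, d1 w' p))
  rw [hsympl, hham]
  ring


/-- Lemma 4.2: the coordinate change `w(s,t) = φ_H^t((φ_H^1)⁻¹(w′(s,t)))`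
preserves the action functional:
`∫ w*ω + ∫₀¹ H(t, w(1,t)) dt = ∫ (w′)*ω + ∫₀¹ H(t, w(0,t)) dt`. -/
theorem coordinate_change_action {n : ℕ} (H : ℝ → CE n → ℝ) (φ : ℝ → CE n ≃ CE n)
    (hHsmooth : ContDiff ℝ (⊤ : ℕ∞) (Function.uncurry H))
    (hHsupp : HasCompactSupport (Function.uncurry H))
    (hφ : IsHamFlow H φ)
    (w' : ℝ × ℝ → CE n) (hw' : ContDiff ℝ (⊤ : ℕ∞) w')
    (w : ℝ × ℝ → CE n) (hw : w = fun p : ℝ × ℝ => φ p.2 ((φ 1).symm (w' p))) :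
    areaSq w + (∫ t in (0:ℝ)..1, H t (w (1, t)))
      = areaSq w' + ∫ t in (0:ℝ)..1, H t (w (0, t)) := by
  -- setup: the coordinate-change map ψ
  set ψ : ℝ × CE n → CE n := fun q => φ q.1 ((φ 1).symm q.2) with hψdef
  have hψ : ContDiff ℝ (⊤ : ℕ∞) ψ :=
    hφ.smooth.comp (contDiff_fst.prodMk
      (hφ.smooth_symm.comp ((contDiff_const (c := (1 : ℝ))).prodMk contDiff_snd)))
  have hflow' : ∀ t y, HasDerivAt (fun s => ψ (s, y)) (hamVF H t (ψ (t, y))) t :=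
    fun t y => hφ.isFlow t ((φ 1).symm y)
  have hψ1 : ∀ y, ψ (1, y) = y := fun y => (φ 1).apply_symm_apply y
  have hweq : ∀ p : ℝ × ℝ, w p = ψ (p.2, w' p) := fun p => by rw [hw]
  have hkey := pointwise_key H hHsmooth ψ hψ hflow' hψ1 w' hw' w hweq
  have hws : ContDiff ℝ (⊤ : ℕ∞) w := by
    rw [show w = fun p : ℝ × ℝ => ψ (p.2, w' p) from funext hweq]
    exact hψ.comp (contDiff_snd.prodMk hw')
  have hwd : Differentiable ℝ w := hws.differentiable (by simp)
  have hw'd : Differentiable ℝ w' := hw'.differentiable (by simp)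
  -- the function whose s-derivative appears
  set h : ℝ × ℝ → ℝ := fun q => H q.2 (w q) with hhdef
  have hhs : ContDiff ℝ (⊤ : ℕ∞) h := hHsmooth.comp (contDiff_snd.prodMk hws)
  set g2 : ℝ × ℝ → ℝ := fun p => fderiv ℝ h p (1, 0) with hg2def
  have hg2cont : Continuous g2 :=
    (ContinuousLinearMap.apply ℝ ℝ (((1 : ℝ), (0 : ℝ)) : ℝ × ℝ)).continuous.comp
      (hhs.fderiv_right (m := (⊤ : ℕ∞)) (by simp)).continuous
  -- continuity of the symplectic densities
  have hsympcont : ∀ (u : ℝ × ℝ → CE n), ContDiff ℝ (⊤ : ℕ∞) u →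
      Continuous (fun p => symp (d1 u p) (d2 u p)) := by
    intro u hu
    have hud : Differentiable ℝ u := hu.differentiable (by simp)
    have h1 : (fun p => d1 u p) = fun p => fderiv ℝ u p (1, 0) :=
      funext (d1_fderiv u hud)
    have h2 : (fun p => d2 u p) = fun p => fderiv ℝ u p (0, 1) :=
      funext (d2_fderiv u hud)
    have hc1 : Continuous (fun p => d1 u p) := by
      rw [h1]
      exact (ContinuousLinearMap.apply ℝ (CE n) (((1 : ℝ), (0 : ℝ)) : ℝ × ℝ)).continuous.comp
        (hu.fderiv_right (m := (⊤ : ℕ∞)) (by simp)).continuous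
    have hc2 : Continuous (fun p => d2 u p) := by
      rw [h2]
      exact (ContinuousLinearMap.apply ℝ (CE n) (((0 : ℝ), (1 : ℝ)) : ℝ × ℝ)).continuous.comp
        (hu.fderiv_right (m := (⊤ : ℕ∞)) (by simp)).continuous
    show Continuous fun p => inner (𝕜 := ℝ) ((Complex.I : ℂ) • d1 u p) (d2 u p)
    exact Continuous.inner (hc1.const_smul (Complex.I : ℂ)) hc2
  have hsqcompact : IsCompact square := isCompact_Icc.prod isCompact_Icc
  have hsqmeas : MeasurableSet square := (measurableSet_Icc.prod measurableSet_Icc)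
  have hint1 : IntegrableOn (fun p => symp (d1 w' p) (d2 w' p)) square volume :=
    ((hsympcont w' hw').continuousOn).integrableOn_compact hsqcompact
  have hintg2 : IntegrableOn g2 square volume :=
    hg2cont.continuousOn.integrableOn_compact hsqcompact
  -- Step 1: areaSq w = areaSq w' - ∫ g2
  have step1 : areaSq w = areaSq w' - ∫ p in square, g2 p := by
    rw [areaSq, areaSq]
    rw [show (fun p => symp (d1 w p) (d2 w p))
        = fun p => symp (d1 w' p) (d2 w' p) - g2 p from funext hkey]
    exact integral_sub hint1 hintg2
  -- Step 2: compute ∫ g2 over the square by Fubini + FTC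
  have hder : ∀ (t s : ℝ), HasDerivAt (fun r => h (r, t)) (g2 (s, t)) s := by
    intro t s
    have := ((hhs.differentiable (by simp)) (s, t)).hasFDerivAt.comp_hasDerivAt s
      ((hasDerivAt_id s).prodMk (hasDerivAt_const s t))
    exact this
  have hcont0 : Continuous (fun t : ℝ => H t (w (0, t))) := by
    have : Continuous (fun t : ℝ => w ((0 : ℝ), t)) :=
      hws.continuous.comp (continuous_const.prodMk continuous_id)
    exact hHsmooth.continuous.comp (continuous_id.prodMk this)
  have hcont1 : Continuous (fun t : ℝ => H t (w (1, t))) := by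
    have : Continuous (fun t : ℝ => w ((1 : ℝ), t)) :=
      hws.continuous.comp (continuous_const.prodMk continuous_id)
    exact hHsmooth.continuous.comp (continuous_id.prodMk this)
  have inner_ftc : ∀ t : ℝ, (∫ s in Icc (0:ℝ) 1, g2 (s, t))
      = H t (w (1, t)) - H t (w (0, t)) := by
    intro t
    rw [MeasureTheory.integral_Icc_eq_integral_Ioc,
      ← intervalIntegral.integral_of_le (zero_le_one)]
    have := intervalIntegral.integral_eq_sub_of_hasDerivAt
      (f := fun r => h (r, t)) (f' := fun s => g2 (s, t)) (a := (0:ℝ)) (b := 1)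
      (fun x _ => hder t x)
      ((hg2cont.comp (continuous_id.prodMk continuous_const)).intervalIntegrable 0 1)
    simpa using this
  have step2 : (∫ p in square, g2 p)
      = (∫ t in (0:ℝ)..1, H t (w (1, t))) - ∫ t in (0:ℝ)..1, H t (w (0, t)) := by
    have hintg2' : IntegrableOn g2 (Icc (0:ℝ) 1 ×ˢ Icc (0:ℝ) 1)
        (volume.prod volume) := by
      rw [← MeasureTheory.Measure.volume_eq_prod]
      exact hintg2
    have hfub : (∫ p in square, g2 p)
        = ∫ s in Icc (0:ℝ) 1, ∫ t in Icc (0:ℝ) 1, g2 (s, t) := by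
      rw [square, MeasureTheory.Measure.volume_eq_prod]
      exact MeasureTheory.setIntegral_prod g2 hintg2'
    have hswap : (∫ s in Icc (0:ℝ) 1, ∫ t in Icc (0:ℝ) 1, g2 (s, t))
        = ∫ t in Icc (0:ℝ) 1, ∫ s in Icc (0:ℝ) 1, g2 (s, t) := by
      apply MeasureTheory.integral_integral_swap
      rw [MeasureTheory.Measure.prod_restrict]
      exact hintg2'
    rw [hfub, hswap]
    have : (∫ t in Icc (0:ℝ) 1, ∫ s in Icc (0:ℝ) 1, g2 (s, t))
        = ∫ t in Icc (0:ℝ) 1, (H t (w (1, t)) - H t (w (0, t))) :=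
      integral_congr_ae (Filter.Eventually.of_forall fun t => inner_ftc t)
    rw [this, MeasureTheory.integral_Icc_eq_integral_Ioc,
      ← intervalIntegral.integral_of_le (zero_le_one)]
    exact intervalIntegral.integral_sub (hcont1.intervalIntegrable 0 1)
      (hcont0.intervalIntegrable 0 1)
  linarith [step1, step2]

end
end
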